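/- arXiv:2504.03004 — 2 statements merged into one kernel-verified Lean document; each statement's English description precedes it below -/
import Mathlib

section
/- Every complete flag has the dimension matrix of a permutation flag: Let W_0 ⊆ W_1 ⊆ … ⊆ W_n be ℂ-linear subspaces of ℂ^n with dim W_i = i for all 0 ≤ i ≤ n, and let E_j = span(e_1, …, e_j), where e_1, …, e_n is the standard basis. Then there exists a permutation w ∈ S_n such that for all 1 ≤ i, j ≤ n, dim(W_i ∩ E_j) = #{k : 1 ≤ k ≤ j and w(k) ≤ i}. -/
open Submodule Module

private lemma flag_aux_step {V : Type*} [AddCommGroup V] [Module ℂ V] [FiniteDimensional ℂ V]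
    (C : Submodule ℂ V) {A B : Submodule ℂ V} (hAB : A ≤ B) :
    finrank ℂ (C ⊓ B : Submodule ℂ V) + finrank ℂ A
      ≤ finrank ℂ (C ⊓ A : Submodule ℂ V) + finrank ℂ B := by
  have h := Submodule.finrank_sup_add_finrank_inf_eq (C ⊓ B) A
  have h1 : (C ⊓ B) ⊓ A = C ⊓ A := by
    rw [inf_assoc, inf_eq_right.mpr hAB]
  have h2 : (C ⊓ B) ⊔ A ≤ B := sup_le inf_le_right hAB
  have h3 : finrank ℂ ((C ⊓ B) ⊔ A : Submodule ℂ V) ≤ finrank ℂ B :=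
    Submodule.finrank_mono h2
  rw [h1] at h
  omega

/-- **Every complete flag has the dimension matrix of a permutation flag.**
Let `W_0 ⊆ W_1 ⊆ … ⊆ W_n` be `ℂ`-linear subspaces of `ℂ^n` with `dim W_i = i`,
and let `E_j = span (e_1, …, e_j)` be the coordinate flag (the standard basis
vector `e_k` is `Pi.single k 1`; the index `k : Fin n` is `0`-based, so
`E_j = span {e_k : k ≤ j}` for `j : Fin n` corresponds to the `1`-based
`E_{j+1}`).  Then there exists a permutation `w ∈ S_n` such that for all
`1 ≤ i, j ≤ n` (here `i.succ` and `j` with `i, j : Fin n`, `0`-based):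
`dim (W_i ∩ E_j) = #{k : k ≤ j and w k ≤ i}`. -/
theorem flag_has_permutation_dimension_matrix {n : ℕ}
    (W : Fin (n + 1) → Submodule ℂ (Fin n → ℂ))
    (hmono : Monotone W)
    (hdim : ∀ i : Fin (n + 1), Module.finrank ℂ (W i) = (i : ℕ)) :
    ∃ w : Equiv.Perm (Fin n), ∀ i j : Fin n,
      Module.finrank ℂ
          ↥(W i.succ ⊓
            Submodule.span ℂ
              ((fun k : Fin n => (Pi.single k 1 : Fin n → ℂ)) '' {k : Fin n | k ≤ j}))
        = (Finset.univ.filter fun k : Fin n => k ≤ j ∧ w k ≤ i).card := by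
  classical
  set E : ℕ → Submodule ℂ (Fin n → ℂ) :=
    fun m => Submodule.span ℂ
      ((fun k : Fin n => (Pi.single k 1 : Fin n → ℂ)) '' {k : Fin n | (k : ℕ) < m}) with hE
  have hEmono : Monotone E := fun a b hab =>
    span_mono (Set.image_mono fun k hk => lt_of_lt_of_le hk hab)
  have hE0 : E 0 = ⊥ := by
    simp [hE]
  -- each step of the coordinate flag increases rank by at most 1
  have hEstep : ∀ m, finrank ℂ (E (m + 1)) ≤ finrank ℂ (E m) + 1 := by
    intro m
    by_cases hm : m < n
    · have hset : {k : Fin n | (k : ℕ) < m + 1}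
          = {k : Fin n | (k : ℕ) < m} ∪ {(⟨m, hm⟩ : Fin n)} := by
        ext k
        simp only [Set.mem_setOf_eq, Set.mem_union, Set.mem_singleton_iff, Fin.ext_iff]
        omega
      have : E (m + 1) = E m ⊔ Submodule.span ℂ {(Pi.single (⟨m, hm⟩ : Fin n) 1 : Fin n → ℂ)} := by
        rw [hE]
        simp only [hset, Set.image_union, Set.image_singleton, Submodule.span_union]
      rw [this]
      calc finrank ℂ (E m ⊔ Submodule.span ℂ {(Pi.single (⟨m, hm⟩ : Fin n) 1 : Fin n → ℂ)} :
              Submodule ℂ (Fin n → ℂ))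
          ≤ finrank ℂ (E m)
            + finrank ℂ (Submodule.span ℂ {(Pi.single (⟨m, hm⟩ : Fin n) 1 : Fin n → ℂ)} :
              Submodule ℂ (Fin n → ℂ)) :=
            Submodule.finrank_add_le_finrank_add_finrank _ _
        _ ≤ finrank ℂ (E m) + 1 := by
            have : finrank ℂ (Submodule.span ℂ {(Pi.single (⟨m, hm⟩ : Fin n) 1 : Fin n → ℂ)} :
                Submodule ℂ (Fin n → ℂ)) = 1 :=
              finrank_span_singleton (by
                intro h
                have := congrFun h ⟨m, hm⟩
                simp at this)
            omega
    · have hset : {k : Fin n | (k : ℕ) < m + 1} = {k : Fin n | (k : ℕ) < m} := by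
        ext k
        simp only [Set.mem_setOf_eq]
        have := k.isLt
        omega
      have h2 : E (m + 1) = E m :=
        congrArg (fun s : Set (Fin n) =>
          Submodule.span ℂ ((fun k : Fin n => (Pi.single k 1 : Fin n → ℂ)) '' s)) hset
      rw [h2]
      omega
  have hEtop : E n = ⊤ := by
    have : {k : Fin n | (k : ℕ) < n} = Set.univ := by
      ext k; simp [k.isLt]
    have h2 : E n = Submodule.span ℂ
        (Set.range fun k : Fin n => (Pi.single k 1 : Fin n → ℂ)) := by
      rw [show E n = Submodule.span ℂ
        ((fun k : Fin n => (Pi.single k 1 : Fin n → ℂ)) '' {k : Fin n | (k : ℕ) < n}) from rfl,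
        this, Set.image_univ]
    rw [h2]
    have hb : Set.range (fun k : Fin n => (Pi.single k 1 : Fin n → ℂ))
        = Set.range (Pi.basisFun ℂ (Fin n)) := by
      congr 1
      ext k
      simp [Pi.basisFun_apply]
    rw [hb, Basis.span_eq]
  -- rank of E m is exactly m for m ≤ n
  have hErle : ∀ m, finrank ℂ (E m) ≤ m := by
    intro m
    induction m with
    | zero => simp [hE0]
    | succ m ih => have := hEstep m; omega
  have hErgap : ∀ d m, finrank ℂ (E (m + d)) ≤ finrank ℂ (E m) + d := by
    intro d
    induction d with
    | zero => simp
    | succ d ih =>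
      intro m
      have h1 := hEstep (m + d)
      have h2 := ih m
      have : m + (d + 1) = (m + d) + 1 := by omega
      rw [this]
      omega
  have hErank : ∀ m, m ≤ n → finrank ℂ (E m) = m := by
    intro m hm
    have h1 := hErle m
    have h2 := hErgap (n - m) m
    have hmn : m + (n - m) = n := by omega
    rw [hmn, hEtop] at h2
    have htop : finrank ℂ (⊤ : Submodule ℂ (Fin n → ℂ)) = n := by
      rw [finrank_top]
      simp [Module.finrank_pi]
    omega
  -- shorthand for the dimension matrix
  set f : Fin (n + 1) → ℕ → ℕ := fun a m => finrank ℂ (W a ⊓ E m : Submodule ℂ (Fin n → ℂ))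
    with hf
  have hW0 : W 0 = ⊥ := by
    have := hdim 0
    simp only [Fin.val_zero] at this
    exact Submodule.finrank_eq_zero.mp this
  have hf0 : ∀ m, f 0 m = 0 := by
    intro m; simp [hf, hW0]
  have hWtop : W (Fin.last n) = ⊤ := by
    apply Submodule.eq_top_of_finrank_eq
    rw [hdim (Fin.last n)]
    simp [Module.finrank_pi]
  have hftop : ∀ m, m ≤ n → f (Fin.last n) m = m := by
    intro m hm
    show finrank ℂ (W (Fin.last n) ⊓ E m : Submodule ℂ (Fin n → ℂ)) = m
    rw [hWtop, top_inf_eq]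
    exact hErank m hm
  have hfcolmono : ∀ (a : Fin (n + 1)) m, f a m ≤ f a (m + 1) := by
    intro a m
    exact Submodule.finrank_mono (inf_le_inf_left _ (hEmono (Nat.le_succ m)))
  have hfcolstep : ∀ (a : Fin (n + 1)) m, f a (m + 1) ≤ f a m + 1 := by
    intro a m
    have h := flag_aux_step (W a) (hEmono (Nat.le_add_right m 1))
    have := hEstep m
    simp only [hf]
    omega
  -- the jump predicate and its characterization
  have hJ_iff : ∀ (a : Fin (n + 1)) m, f a m < f a (m + 1) ↔ ¬ (W a ⊓ E (m + 1) ≤ E m) := by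
    intro a m
    constructor
    · intro hlt hle
      have : W a ⊓ E (m + 1) ≤ W a ⊓ E m := le_inf inf_le_left hle
      have := Submodule.finrank_mono this
      simp only [hf] at hlt
      omega
    · intro hnle
      have hle : W a ⊓ E m ≤ W a ⊓ E (m + 1) := inf_le_inf_left _ (hEmono (Nat.le_succ m))
      have hne : W a ⊓ E m ≠ W a ⊓ E (m + 1) := by
        intro heq
        exact hnle (heq ▸ inf_le_right)
      exact Submodule.finrank_lt_finrank_of_lt (lt_of_le_of_ne hle hne)
  have hJmono : ∀ (a b : Fin (n + 1)) m, a ≤ b → f a m < f a (m + 1) → f b m < f b (m + 1) := by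
    intro a b m hab hJ
    rw [hJ_iff] at hJ ⊢
    intro hle
    exact hJ (le_trans (inf_le_inf_right _ (hmono hab)) hle)
  -- definition of the permutation values
  have hex : ∀ j : Fin n, ∃ a : ℕ, ∃ h : a < n + 1, f ⟨a, h⟩ (j : ℕ) < f ⟨a, h⟩ ((j : ℕ) + 1) := by
    intro j
    refine ⟨n, Nat.lt_succ_self n, ?_⟩
    have h1 : f (Fin.last n) (j : ℕ) = (j : ℕ) := hftop _ (le_of_lt j.isLt)
    have h2 : f (Fin.last n) ((j : ℕ) + 1) = (j : ℕ) + 1 := hftop _ j.isLt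
    show f (Fin.last n) (j : ℕ) < f (Fin.last n) ((j : ℕ) + 1)
    omega
  set wN : Fin n → ℕ := fun j => Nat.find (hex j) with hwN
  have hwN_le : ∀ j, wN j ≤ n := by
    intro j
    obtain ⟨h1, -⟩ := Nat.find_spec (hex j)
    exact Nat.lt_succ_iff.mp h1
  have hwN_pos : ∀ j, 1 ≤ wN j := by
    intro j
    by_contra h
    have h0 : Nat.find (hex j) = 0 := by
      have h0' : wN j = 0 := by omega
      exact h0'
    obtain ⟨hlt, hJ⟩ := Nat.find_spec (hex j)
    have heq0 : (⟨Nat.find (hex j), hlt⟩ : Fin (n + 1)) = 0 := by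
      ext
      simp only [h0, Fin.val_zero]
    rw [heq0, hf0, hf0] at hJ
    omega
  -- key: jump at column j for level a iff wN j ≤ a
  have hJ_wN : ∀ (a : Fin (n + 1)) (j : Fin n),
      (f a (j : ℕ) < f a ((j : ℕ) + 1)) ↔ wN j ≤ (a : ℕ) := by
    intro a j
    constructor
    · intro hJ
      exact Nat.find_le ⟨a.isLt, by rwa [Fin.eta]⟩
    · intro hle
      obtain ⟨hlt, hJ⟩ := Nat.find_spec (hex j)
      exact hJmono _ _ _ (by rwa [Fin.le_def]) hJ
  -- the counting formula
  have hcount : ∀ (a : Fin (n + 1)) m, m ≤ n →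
      f a m = (Finset.univ.filter fun k : Fin n => (k : ℕ) < m ∧ wN k ≤ (a : ℕ)).card := by
    intro a m
    induction m with
    | zero =>
      intro _
      simp [hf, hE0]
    | succ m ih =>
      intro hm
      have hmn : m < n := hm
      have ihm := ih (by omega)
      have hsplit : (Finset.univ.filter fun k : Fin n => (k : ℕ) < m + 1 ∧ wN k ≤ (a : ℕ)).card
          = (Finset.univ.filter fun k : Fin n => (k : ℕ) < m ∧ wN k ≤ (a : ℕ)).card
            + (if wN ⟨m, hmn⟩ ≤ (a : ℕ) then 1 else 0) := by
        rw [Finset.card_filter, Finset.card_filter]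
        have h1 : ∀ k : Fin n,
            (if (k : ℕ) < m + 1 ∧ wN k ≤ (a : ℕ) then 1 else 0)
              = (if (k : ℕ) < m ∧ wN k ≤ (a : ℕ) then 1 else 0)
                + (if k = ⟨m, hmn⟩ then (if wN k ≤ (a : ℕ) then 1 else 0) else 0) := by
          intro k
          by_cases hk : k = ⟨m, hmn⟩
          · subst hk
            simp
          · have : (k : ℕ) ≠ m := fun h => hk (Fin.ext h)
            have hiff : ((k : ℕ) < m + 1) ↔ ((k : ℕ) < m) := by omega
            simp [hk, hiff]
        rw [Finset.sum_congr rfl fun k _ => h1 k, Finset.sum_add_distrib]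
        congr 1
        rw [Finset.sum_ite_eq' Finset.univ (⟨m, hmn⟩ : Fin n)
          (fun k => if wN k ≤ (a : ℕ) then 1 else 0)]
        simp
      rw [hsplit, ← ihm]
      by_cases hJ : f a m < f a (m + 1)
      · have hle := hfcolstep a m
        have hw : wN ⟨m, hmn⟩ ≤ (a : ℕ) := by
          have := (hJ_wN a ⟨m, hmn⟩).mp
          exact this hJ
        rw [if_pos hw]
        omega
      · have heq : f a (m + 1) = f a m := le_antisymm (not_lt.mp hJ) (hfcolmono a m)
        have hw : ¬ wN ⟨m, hmn⟩ ≤ (a : ℕ) := by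
          intro hw
          exact hJ ((hJ_wN a ⟨m, hmn⟩).mpr hw)
        rw [if_neg hw]
        omega
  -- injectivity of wN
  have hkey : ∀ j j' : Fin n, j < j' → wN j = wN j' → False := by
    intro j j' hlt heq
    set m0 := wN j with hm0
    have hm0pos : 1 ≤ m0 := hwN_pos j
    have hm0le : m0 ≤ n := hwN_le j
    set a : Fin (n + 1) := ⟨m0, by omega⟩ with ha
    set a' : Fin (n + 1) := ⟨m0 - 1, by omega⟩ with ha'
    have hva : (a : ℕ) = m0 := rfl
    have hva' : (a' : ℕ) = m0 - 1 := rfl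
    have haa' : W a' ≤ W a := by
      apply hmono
      rw [Fin.le_def, hva, hva']
      omega
    have hstep := flag_aux_step (E ((j' : ℕ) + 1)) haa'
    rw [inf_comm (E ((j' : ℕ) + 1)) (W a), inf_comm (E ((j' : ℕ) + 1)) (W a')] at hstep
    have hda : finrank ℂ (W a) = m0 := by rw [hdim a]
    have hda' : finrank ℂ (W a') = m0 - 1 := by rw [hdim a']
    set T := Finset.univ.filter
      (fun k : Fin n => (k : ℕ) < (j' : ℕ) + 1 ∧ wN k ≤ (a : ℕ)) with hT
    set S := Finset.univ.filter
      (fun k : Fin n => (k : ℕ) < (j' : ℕ) + 1 ∧ wN k ≤ (a' : ℕ)) with hS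
    have hfa : finrank ℂ (W a ⊓ E ((j' : ℕ) + 1) : Submodule ℂ (Fin n → ℂ)) = T.card :=
      hcount a ((j' : ℕ) + 1) j'.isLt
    have hfa' : finrank ℂ (W a' ⊓ E ((j' : ℕ) + 1) : Submodule ℂ (Fin n → ℂ)) = S.card :=
      hcount a' ((j' : ℕ) + 1) j'.isLt
    have hjT : j ∈ T := by
      simp only [hT, Finset.mem_filter, Finset.mem_univ, true_and, hva]
      have : (j : ℕ) < (j' : ℕ) := hlt
      omega
    have hj'T : j' ∈ T := by
      simp only [hT, Finset.mem_filter, Finset.mem_univ, true_and, hva]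
      refine ⟨by omega, ?_⟩
      rw [← heq]
    have hjS : j ∉ S := by
      simp only [hS, Finset.mem_filter, Finset.mem_univ, true_and, hva', not_and]
      intro _
      omega
    have hj'S : j' ∉ S := by
      simp only [hS, Finset.mem_filter, Finset.mem_univ, true_and, hva', not_and]
      intro _
      rw [← heq]
      omega
    have hne : j ≠ j' := ne_of_lt hlt
    have hsub : insert j (insert j' S) ⊆ T := by
      intro k hk
      simp only [Finset.mem_insert] at hk
      rcases hk with rfl | rfl | hk
      · exact hjT
      · exact hj'T
      · simp only [hS, Finset.mem_filter, Finset.mem_univ, true_and, hva'] at hk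
        simp only [hT, Finset.mem_filter, Finset.mem_univ, true_and, hva]
        exact ⟨hk.1, by omega⟩
    have hcard : S.card + 2 ≤ T.card := by
      have h1 : (insert j (insert j' S)).card = S.card + 2 := by
        rw [Finset.card_insert_of_notMem, Finset.card_insert_of_notMem hj'S]
        simp only [Finset.mem_insert]
        push_neg
        exact ⟨hne, hjS⟩
      rw [← h1]
      exact Finset.card_le_card hsub
    omega
  have hinj : Function.Injective wN := by
    intro j j' heq
    by_contra hne
    rcases lt_or_gt_of_ne hne with h | h
    · exact hkey j j' h heq
    · exact hkey j' j h heq.symm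
  -- assemble the permutation
  have hwlt : ∀ j, wN j - 1 < n := by
    intro j
    have := hwN_pos j
    have := hwN_le j
    omega
  set w' : Fin n → Fin n := fun j => ⟨wN j - 1, hwlt j⟩ with hw'
  have hw'inj : Function.Injective w' := by
    intro j j' h
    apply hinj
    have h1 := hwN_pos j
    have h2 := hwN_pos j'
    have h3 : wN j - 1 = wN j' - 1 := congrArg Fin.val h
    omega
  have hw'bij : Function.Bijective w' := (Finite.injective_iff_bijective).mp hw'inj
  refine ⟨Equiv.ofBijective w' hw'bij, ?_⟩
  intro i j
  have hset : {k : Fin n | k ≤ j} = {k : Fin n | (k : ℕ) < (j : ℕ) + 1} := by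
    ext k
    simp only [Set.mem_setOf_eq, Fin.le_def]
    omega
  have hLHS : Module.finrank ℂ
      ↥(W i.succ ⊓ Submodule.span ℂ
        ((fun k : Fin n => (Pi.single k 1 : Fin n → ℂ)) '' {k : Fin n | k ≤ j}))
      = f i.succ ((j : ℕ) + 1) := by
    rw [hset]
  rw [hLHS, hcount i.succ ((j : ℕ) + 1) j.isLt]
  congr 1
  apply Finset.filter_congr
  intro k _
  have h1 := hwN_pos k
  have hsucc : ((i.succ : Fin (n + 1)) : ℕ) = (i : ℕ) + 1 := Fin.val_succ i
  simp only [Equiv.ofBijective_apply, hw', Fin.le_def, Nat.lt_succ_iff, hsucc]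
  constructor
  · rintro ⟨hkj, hwk⟩
    exact ⟨hkj, by omega⟩
  · rintro ⟨hkj, hwk⟩
    exact ⟨hkj, by omega⟩
end

section
/- Generic specialization of parametric polynomial systems: Let f_1, …, f_m be polynomials in variables x_1, …, x_s with coefficients in the polynomial ring ℂ[y_1, …, y_k]. Then the following are equivalent: (i) the system f_1 = … = f_m = 0 has a solution in K^s, where K is an algebraic closure of the rational function field ℂ(y_1, …, y_k); (ii) there exists a nonzero polynomial h ∈ ℂ[y_1, …, y_k] such that for every a ∈ ℂ^k with h(a) ≠ 0, the specialized system f_1(a, x) = … = f_m(a, x) = 0 has a solution x ∈ ℂ^s. -/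
open MvPolynomial
set_option maxHeartbeats 1000000
set_option synthInstance.maxHeartbeats 1000000

noncomputable section AuxPi

variable {σ : Type*} [DecidableEq σ]

lemma coeff_sum_monomial' {R : Type*} [CommSemiring R] (S : Finset (σ →₀ ℕ))
    (w : (σ →₀ ℕ) → R) (d : σ →₀ ℕ) :
    MvPolynomial.coeff d (∑ e ∈ S, (MvPolynomial.monomial e (w e))) =
      if d ∈ S then w d else 0 := by
  classical
  rw [MvPolynomial.coeff_sum]
  simp only [MvPolynomial.coeff_monomial]
  exact Finset.sum_ite_eq' S d w

variable {F K : Type*} [Field F] [Field K] [Algebra F K]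

/-- Apply an `F`-linear functional to the coefficients of a polynomial over `K`. -/
def piPoly (π : K →ₗ[F] F) (q : MvPolynomial σ K) : MvPolynomial σ F :=
  ∑ d ∈ q.support, MvPolynomial.monomial d (π (q.coeff d))

lemma coeff_piPoly (π : K →ₗ[F] F) (q : MvPolynomial σ K) (d : σ →₀ ℕ) :
    (piPoly π q).coeff d = π (q.coeff d) := by
  classical
  rw [piPoly, coeff_sum_monomial']
  split_ifs with hd
  · rfl
  · rw [MvPolynomial.notMem_support_iff.mp hd, map_zero]

lemma piPoly_mul_map (π : K →ₗ[F] F) (q : MvPolynomial σ K) (p : MvPolynomial σ F) :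
    piPoly π (q * p.map (algebraMap F K)) = piPoly π q * p := by
  apply MvPolynomial.ext
  intro d
  rw [coeff_piPoly, MvPolynomial.coeff_mul, MvPolynomial.coeff_mul, map_sum]
  refine Finset.sum_congr rfl fun x _ => ?_
  rw [coeff_piPoly, MvPolynomial.coeff_map]
  have : q.coeff x.1 * algebraMap F K (p.coeff x.2) = p.coeff x.2 • q.coeff x.1 := by
    rw [Algebra.smul_def, mul_comm]
  rw [this, map_smul, smul_eq_mul, mul_comm]

lemma piPoly_sum (π : K →ₗ[F] F) {ι : Type*} (s : Finset ι) (g : ι → MvPolynomial σ K) :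
    piPoly π (∑ i ∈ s, g i) = ∑ i ∈ s, piPoly π (g i) := by
  apply MvPolynomial.ext
  intro d
  rw [coeff_piPoly, MvPolynomial.coeff_sum, MvPolynomial.coeff_sum, map_sum]
  exact Finset.sum_congr rfl fun i _ => (coeff_piPoly π (g i) d).symm

lemma piPoly_one (π : K →ₗ[F] F) (hπ : π 1 = 1) : piPoly π (1 : MvPolynomial σ K) = 1 := by
  apply MvPolynomial.ext
  intro d
  rw [coeff_piPoly, MvPolynomial.coeff_one, MvPolynomial.coeff_one]
  split_ifs
  · exact hπ
  · exact map_zero π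

/-- There is an `F`-linear functional on `K` sending `1` to `1`. -/
lemma exists_pi_one : ∃ π : K →ₗ[F] F, π 1 = 1 := by
  obtain ⟨q0, hq0⟩ := Submodule.exists_isCompl (Submodule.span F {(1 : K)})
  let eSpan := LinearEquiv.toSpanNonzeroSingleton F K 1 one_ne_zero
  refine ⟨eSpan.symm.toLinearMap ∘ₗ Submodule.linearProjOfIsCompl _ q0 hq0, ?_⟩
  have h1 : ((⟨1, Submodule.mem_span_singleton_self 1⟩ : Submodule.span F {(1 : K)}) : K) = 1 := rfl
  have h2 : Submodule.linearProjOfIsCompl _ q0 hq0 (1 : K) =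
      ⟨1, Submodule.mem_span_singleton_self 1⟩ :=
    Submodule.linearProjOfIsCompl_apply_left hq0 ⟨1, Submodule.mem_span_singleton_self 1⟩
  simp only [LinearMap.coe_comp, Function.comp_apply, h2, LinearEquiv.coe_coe]
  rw [LinearEquiv.symm_apply_eq, LinearEquiv.toSpanNonzeroSingleton_one]

end AuxPi

noncomputable section AuxMore

variable {σ : Type*} [DecidableEq σ]

lemma coeff_sum_monomial'' {R : Type*} [CommSemiring R] (S : Finset (σ →₀ ℕ))
    (w : (σ →₀ ℕ) → R) (d : σ →₀ ℕ) :
    MvPolynomial.coeff d (∑ e ∈ S, (MvPolynomial.monomial e (w e))) =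
      if d ∈ S then w d else 0 := by
  rw [MvPolynomial.coeff_sum]
  simp only [MvPolynomial.coeff_monomial]
  exact Finset.sum_ite_eq' S d w

/-- Clearing denominators of a polynomial over a fraction field. -/
lemma exists_clear_denom (P : Type*) [CommRing P] [IsDomain P]
    (F : Type*) [Field F] [Algebra P F] [IsFractionRing P F] (q : MvPolynomial σ F) :
    ∃ c : P, c ≠ 0 ∧ ∃ Q : MvPolynomial σ P,
      Q.map (algebraMap P F) = MvPolynomial.C (algebraMap P F c) * q := by
  obtain ⟨b, hb⟩ := IsLocalization.exist_integer_multiples (nonZeroDivisors P)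
    q.support (fun d => q.coeff d)
  have hb' : ∀ d : σ →₀ ℕ, ∃ y : P,
      d ∈ q.support → algebraMap P F y = (b : P) • q.coeff d := by
    intro d
    by_cases hd : d ∈ q.support
    · obtain ⟨y, hy⟩ := hb d hd
      exact ⟨y, fun _ => hy⟩
    · exact ⟨0, fun h => absurd h hd⟩
  choose r hr using hb'
  refine ⟨b, nonZeroDivisors.coe_ne_zero b, ∑ d ∈ q.support, MvPolynomial.monomial d (r d), ?_⟩
  apply MvPolynomial.ext
  intro d
  rw [MvPolynomial.coeff_map, MvPolynomial.coeff_C_mul, coeff_sum_monomial'']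
  by_cases hd : d ∈ q.support
  · rw [if_pos hd, hr d hd, Algebra.smul_def]
  · rw [if_neg hd, MvPolynomial.notMem_support_iff.mp hd, map_zero, mul_zero]

/-- Weak Nullstellensatz, combination form. -/
lemma one_eq_comb_of_no_common_zero {K : Type*} [Field K] [IsAlgClosed K] {m s : ℕ}
    (v : Fin m → MvPolynomial (Fin s) K)
    (h : ∀ x : Fin s → K, ∃ t, MvPolynomial.eval x (v t) ≠ 0) :
    ∃ g : Fin m → MvPolynomial (Fin s) K, ∑ t, g t * v t = 1 := by
  have hZ : MvPolynomial.zeroLocus K (Ideal.span (Set.range v)) = ∅ := by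
    ext x
    simp only [MvPolynomial.mem_zeroLocus_iff, Set.mem_empty_iff_false, iff_false]
    intro hx
    obtain ⟨t, ht⟩ := h x
    exact ht (hx _ (Ideal.subset_span ⟨t, rfl⟩))
  have htop : Ideal.span (Set.range v) = ⊤ := by
    have h2 := MvPolynomial.vanishingIdeal_zeroLocus_eq_radical (K := K) (Ideal.span (Set.range v))
    rw [hZ, MvPolynomial.vanishingIdeal_empty] at h2
    exact Ideal.radical_eq_top.mp h2.symm
  have h1 : (1 : MvPolynomial (Fin s) K) ∈ Ideal.span (Set.range v) := by
    rw [htop]; trivial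
  obtain ⟨g, hg⟩ := (Submodule.mem_span_range_iff_exists_fun _).mp h1
  refine ⟨g, ?_⟩
  simpa only [smul_eq_mul] using hg

end AuxMore

noncomputable section Fwd

variable {P K C : Type*} [CommRing P] [IsDomain P]
  [Field K] [Algebra P K] [Field C] [IsAlgClosed C]

lemma forward_abstract (F : Type*) [Field F] [Algebra P F] [IsFractionRing P F]
    [Algebra F K] [IsScalarTower P F K] [Algebra.IsAlgebraic F K]
    {s m : ℕ} (f : Fin m → MvPolynomial (Fin s) P)
    (x : Fin s → K)
    (hx : ∀ t, MvPolynomial.eval₂ (algebraMap P K) x (f t) = 0) :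
    ∃ h : P, h ≠ 0 ∧ ∀ φ₀ : P →+* C, Function.Surjective φ₀ → φ₀ h ≠ 0 →
      ∃ x' : Fin s → C, ∀ t, MvPolynomial.eval₂ φ₀ x' (f t) = 0 := by
  classical
  have inj : Function.Injective (algebraMap P K) := by
    rw [IsScalarTower.algebraMap_eq P F K]
    exact (algebraMap F K).injective.comp (IsFractionRing.injective _ _)
  have halg : ∀ i, IsAlgebraic P (x i) := fun i =>
    (IsFractionRing.isAlgebraic_iff P F K).mpr (Algebra.IsAlgebraic.isAlgebraic (x i))
  choose z d hd hdz using fun i =>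
    (show ∃ (zz : integralClosure P K) (y : P) (_ : y ≠ 0), algebraMap P K y * x i = zz from by
      obtain ⟨y, hy, hint⟩ := (halg i).exists_integral_multiple
      exact ⟨⟨y • x i, hint⟩, y, hy, (Algebra.smul_def y (x i)).symm⟩)
  refine ⟨∏ i, d i, Finset.prod_ne_zero_iff.mpr fun i _ => hd i, ?_⟩
  set h : P := ∏ i, d i with hh_def
  intro φ₀ φ₀surj ha
  have hh : h ≠ 0 := Finset.prod_ne_zero_iff.mpr fun i _ => hd i
  -- set up localization away from h
  have hιh : IsUnit (algebraMap P K h) :=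
    isUnit_iff_ne_zero.mpr fun h0 => hh (inj (by rwa [map_zero]))
  set R₀ := Localization.Away h with hR₀
  letI : Algebra R₀ K := (IsLocalization.Away.lift (S := R₀) h hιh).toAlgebra
  have hθ : algebraMap R₀ K = IsLocalization.Away.lift (S := R₀) h hιh := rfl
  haveI : IsScalarTower P R₀ K := IsScalarTower.of_algebraMap_eq' (by
    show algebraMap P K = (algebraMap R₀ K).comp (algebraMap P R₀)
    exact (IsLocalization.Away.lift_comp (S := R₀) (x := h) hιh).symm)
  -- x i is integral over R₀
  have hxint : ∀ i, IsIntegral R₀ (x i) := by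
    intro i
    have h1 : IsIntegral R₀ ((z i : K)) := IsIntegral.tower_top (z i).2
    have hdunit : IsUnit (algebraMap P R₀ (d i)) :=
      isUnit_of_dvd_unit (map_dvd _ (Finset.dvd_prod_of_mem d (Finset.mem_univ i)))
        (IsLocalization.Away.algebraMap_isUnit h)
    obtain ⟨u, hu⟩ := hdunit.exists_left_inv
    have hxi : x i = algebraMap R₀ K u * (z i : K) := by
      rw [← hdz i, IsScalarTower.algebraMap_apply P R₀ K (d i),
        ← mul_assoc, ← map_mul, hu, map_one, one_mul]
    rw [hxi]
    exact (isIntegral_algebraMap).mul h1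
  -- the subalgebra B
  set B := Algebra.adjoin R₀ (Set.range x) with hB
  have hxB : ∀ i, x i ∈ B := fun i => Algebra.subset_adjoin ⟨i, rfl⟩
  haveI : Algebra.IsIntegral R₀ B := Algebra.IsIntegral.adjoin (fun v hv => by
    obtain ⟨i, rfl⟩ := hv; exact hxint i)
  -- the evaluation map φ : R₀ → C
  set φ : R₀ →+* C :=
    IsLocalization.Away.lift (S := R₀) (g := φ₀) h (isUnit_iff_ne_zero.mpr ha) with hφ
  have hφa : ∀ p : P, φ (algebraMap P R₀ p) = φ₀ p := fun p =>
    IsLocalization.Away.lift_eq (x := h) _ p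
  have φsurj : Function.Surjective φ := fun c => by
    obtain ⟨p, hp⟩ := φ₀surj c
    exact ⟨algebraMap P R₀ p, by rw [hφa, hp]⟩
  haveI : (RingHom.ker φ).IsMaximal := RingHom.ker_isMaximal_of_surjective φ φsurj
  -- injectivity of R₀ → B
  have θinj : Function.Injective (algebraMap R₀ K) := by
    rw [injective_iff_map_eq_zero]
    intro u hu
    obtain ⟨⟨r, sden⟩, hrs⟩ := IsLocalization.surj (Submonoid.powers h) u
    have h2 : algebraMap R₀ K (u * algebraMap P R₀ sden)
        = algebraMap R₀ K (algebraMap P R₀ r) := by rw [hrs]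
    rw [map_mul, hu, zero_mul] at h2
    have h3 : (r : P) = 0 := inj (by
      rw [IsScalarTower.algebraMap_apply P R₀ K r, ← h2, map_zero])
    have h4 : u * algebraMap P R₀ sden = 0 := by
      rw [hrs, h3, map_zero]
    have h5 : IsUnit (algebraMap P R₀ (sden : P)) :=
      IsLocalization.map_units R₀ sden
    obtain ⟨w, hw⟩ := h5.exists_right_inv
    calc u = u * (algebraMap P R₀ sden * w) := by rw [hw, mul_one]
    _ = u * algebraMap P R₀ sden * w := by rw [mul_assoc]
    _ = 0 := by rw [h4, zero_mul]
  have Binj : Function.Injective (algebraMap R₀ B) := fun u v huv => by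
    apply θinj
    have : ((algebraMap R₀ B u : B) : K) = ((algebraMap R₀ B v : B) : K) := by rw [huv]
    exact this
  have hker : RingHom.ker (algebraMap R₀ B) ≤ RingHom.ker φ := by
    intro r hr
    rw [RingHom.mem_ker] at hr ⊢
    have hr0 : r = 0 := Binj (by rw [hr, map_zero])
    rw [hr0, map_zero]
  obtain ⟨M, hMmax, hMcomap⟩ :=
    Ideal.exists_ideal_over_maximal_of_isIntegral (S := B) (RingHom.ker φ) hker
  haveI : M.IsPrime := hMmax.isPrime
  haveI : Nontrivial (B ⧸ M) := Ideal.Quotient.nontrivial_iff.mpr hMmax.ne_top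
  -- the map χ : C → B ⧸ M
  set e : R₀ ⧸ RingHom.ker φ ≃+* C := RingHom.quotientKerEquivOfSurjective φsurj with he
  set ρ : R₀ ⧸ RingHom.ker φ →+* B ⧸ M :=
    Ideal.quotientMap M (algebraMap R₀ B) (le_of_eq hMcomap.symm) with hρ
  set χ : C →+* B ⧸ M := ρ.comp (e.symm : C ≃+* _).toRingHom with hχ
  have hemk : ∀ r : R₀, e (Ideal.Quotient.mk (RingHom.ker φ) r) = φ r := fun r => rfl
  have hkey : ∀ r : R₀, χ (φ r) = Ideal.Quotient.mk M (algebraMap R₀ B r) := by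
    intro r
    have h1 : (e.symm : C ≃+* _) (φ r) = Ideal.Quotient.mk (RingHom.ker φ) r :=
      e.injective (by rw [RingEquiv.apply_symm_apply, hemk])
    simp only [hχ, RingHom.comp_apply, RingEquiv.toRingHom_eq_coe, RingEquiv.coe_toRingHom]
    rw [h1, hρ, Ideal.quotientMap_mk]
  letI : Algebra C (B ⧸ M) := χ.toAlgebra
  have hχalg : algebraMap C (B ⧸ M) = χ := rfl
  haveI : Algebra.IsIntegral C (B ⧸ M) := by
    constructor
    intro l
    obtain ⟨b, rfl⟩ := Ideal.Quotient.mk_surjective l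
    obtain ⟨p, hmonic, hp⟩ := Algebra.IsIntegral.isIntegral (R := R₀) b
    refine ⟨p.map φ, hmonic.map φ, ?_⟩
    have hcomp : χ.comp φ = (Ideal.Quotient.mk M).comp (algebraMap R₀ B) :=
      RingHom.ext hkey
    rw [hχalg, Polynomial.eval₂_map, hcomp, ← Polynomial.hom_eval₂, hp, map_zero]
  have hsurj : Function.Surjective (algebraMap C (B ⧸ M)) :=
    IsAlgClosed.algebraMap_bijective_of_isIntegral.2
  have hinjχ : Function.Injective (algebraMap C (B ⧸ M)) :=
    (algebraMap C (B ⧸ M)).injective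
  set e' : C ≃+* (B ⧸ M) := RingEquiv.ofBijective (algebraMap C (B ⧸ M)) ⟨hinjχ, hsurj⟩ with he'
  set ψ : B →+* C := (e'.symm : (B ⧸ M) ≃+* C).toRingHom.comp (Ideal.Quotient.mk M) with hψ
  refine ⟨fun i => ψ ⟨x i, hxB i⟩, ?_⟩
  intro t
  -- the evaluation in B
  set gPB : P →+* B := (algebraMap R₀ B).comp (algebraMap P R₀) with hgPB
  set X : Fin s → B := fun i => ⟨x i, hxB i⟩ with hX
  have hvalg : (B.val : B →ₐ[R₀] K).toRingHom.comp gPB = algebraMap P K := by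
    ext1 p
    simp only [RingHom.comp_apply, AlgHom.toRingHom_eq_coe, RingHom.coe_coe, hgPB]
    rw [show (B.val (algebraMap R₀ B (algebraMap P R₀ p)) : K)
        = algebraMap R₀ K (algebraMap P R₀ p) from rfl,
      ← IsScalarTower.algebraMap_apply]
  have hBeval : MvPolynomial.eval₂ gPB X (f t) = 0 := by
    have hval := MvPolynomial.eval₂_comp_left (B.val : B →ₐ[R₀] K).toRingHom gPB X (f t)
    rw [hvalg] at hval
    have hcoe : ((B.val : B →ₐ[R₀] K).toRingHom ∘ X) = x := rfl
    rw [hcoe, hx t] at hval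
    apply Subtype.val_injective
    show ((B.val : B →ₐ[R₀] K).toRingHom (MvPolynomial.eval₂ gPB X (f t)) : K) = ((0 : B) : K)
    rw [hval, ZeroMemClass.coe_zero]
  have hψeval := MvPolynomial.eval₂_comp_left ψ gPB X (f t)
  rw [hBeval, map_zero] at hψeval
  have hψg : ψ.comp gPB = φ₀ := by
    ext1 p
    simp only [RingHom.comp_apply, hgPB, hψ, RingEquiv.toRingHom_eq_coe, RingEquiv.coe_toRingHom]
    rw [← hkey (algebraMap P R₀ p), ← hχalg]
    rw [show (algebraMap C (B ⧸ M)) (φ (algebraMap P R₀ p))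
        = e' (φ (algebraMap P R₀ p)) from rfl]
    rw [RingEquiv.symm_apply_apply, hφa]
  rw [hψg] at hψeval
  have hψX : (ψ ∘ X) = fun i => ψ ⟨x i, hxB i⟩ := rfl
  rw [hψX] at hψeval
  exact hψeval.symm

end Fwd

noncomputable section B

abbrev Pk (k : ℕ) : Type := MvPolynomial (Fin k) ℂ
abbrev Fk (k : ℕ) : Type := FractionRing (Pk k)
abbrev Kk (k : ℕ) : Type := AlgebraicClosure (Fk k)

variable {σ : Type*} [DecidableEq σ]

lemma backward_dir {k s m : ℕ} (f : Fin m → MvPolynomial (Fin s) (Pk k))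
    (h : Pk k) (hne : h ≠ 0)
    (hsol : ∀ a : Fin k → ℂ, MvPolynomial.eval a h ≠ 0 →
      ∃ x : Fin s → ℂ, ∀ t, MvPolynomial.eval₂ (MvPolynomial.eval a) x (f t) = 0) :
    ∃ x : Fin s → Kk k, ∀ t,
      MvPolynomial.eval₂ (algebraMap (Pk k) (Kk k)) x (f t) = 0 := by
  classical
  by_contra hns
  push_neg at hns
  obtain ⟨g, hg⟩ := one_eq_comb_of_no_common_zero
      (fun t => (f t).map (algebraMap (Pk k) (Kk k))) (fun x => by
        obtain ⟨t, ht⟩ := hns x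
        exact ⟨t, by rwa [← MvPolynomial.eval₂_eq_eval_map]⟩)
  obtain ⟨π, hπ1⟩ := exists_pi_one (F := Fk k) (K := Kk k)
  have key : ∑ t, piPoly π (g t) * (f t).map (algebraMap (Pk k) (Fk k)) = 1 := by
    have h2 := congrArg (piPoly π) hg
    rw [piPoly_sum, piPoly_one π hπ1] at h2
    rw [← h2]
    refine Finset.sum_congr rfl fun t _ => ?_
    rw [← piPoly_mul_map π (g t) ((f t).map (algebraMap (Pk k) (Fk k)))]
    congr 1
    rw [MvPolynomial.map_map, ← IsScalarTower.algebraMap_eq]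
  choose c hc Q hQ using fun t => exists_clear_denom (Pk k) (Fk k) (piPoly π (g t))
  have hW : (∑ t, (MvPolynomial.C (∏ t' ∈ Finset.univ.erase t, c t') * Q t) * f t)
      = MvPolynomial.C (∏ t, c t) := by
    have hinj : Function.Injective
        (MvPolynomial.map (algebraMap (Pk k) (Fk k)) :
          MvPolynomial (Fin s) (Pk k) → MvPolynomial (Fin s) (Fk k)) :=
      MvPolynomial.map_injective _ (IsFractionRing.injective _ _)
    apply hinj
    rw [map_sum, MvPolynomial.map_C]
    have step : ∀ t ∈ Finset.univ, MvPolynomial.map (algebraMap (Pk k) (Fk k))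
        ((MvPolynomial.C (∏ t' ∈ Finset.univ.erase t, c t') * Q t) * f t)
        = MvPolynomial.C (algebraMap (Pk k) (Fk k) (∏ t, c t)) *
            (piPoly π (g t) * (f t).map (algebraMap (Pk k) (Fk k))) := by
      intro t _
      rw [map_mul, map_mul, MvPolynomial.map_C, hQ t, ← mul_assoc, ← mul_assoc,
        ← MvPolynomial.C_mul, ← map_mul, Finset.prod_erase_mul _ _ (Finset.mem_univ t)]
    rw [Finset.sum_congr rfl step, ← Finset.mul_sum, key, mul_one]
  have hctot : (∏ t, c t) ≠ 0 := Finset.prod_ne_zero_iff.mpr fun t _ => hc t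
  have hhc : h * ∏ t, c t ≠ 0 := mul_ne_zero hne hctot
  have hex : ∃ a : Fin k → ℂ, MvPolynomial.eval a (h * ∏ t, c t) ≠ 0 := by
    by_contra hall
    push_neg at hall
    exact hhc (MvPolynomial.funext fun x => by rw [hall x, map_zero])
  obtain ⟨a, ha⟩ := hex
  rw [map_mul] at ha
  have ha1 : MvPolynomial.eval a h ≠ 0 := left_ne_zero_of_mul ha
  have ha2 : MvPolynomial.eval a (∏ t, c t) ≠ 0 := right_ne_zero_of_mul ha
  obtain ⟨x, hx⟩ := hsol a ha1
  have hW2 := congrArg (MvPolynomial.eval₂Hom (MvPolynomial.eval a) x) hW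
  rw [map_sum] at hW2
  simp only [map_mul, MvPolynomial.eval₂Hom_C, MvPolynomial.coe_eval₂Hom, hx, mul_zero,
    Finset.sum_const_zero] at hW2
  exact ha2 hW2.symm

end B


/-- **Generic specialization of parametric polynomial systems.**
Let `f_1, …, f_m` be polynomials in variables `x_1, …, x_s` with coefficients
in `ℂ[y_1, …, y_k]`.  The following are equivalent:
(i) the system `f_1 = … = f_m = 0` has a solution over an algebraic closure
`K` of the rational function field `ℂ(y_1, …, y_k)` (the coefficients being
viewed in `K` via `ℂ[y] ⊆ ℂ(y) ⊆ K`);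
(ii) there exists a nonzero polynomial `h ∈ ℂ[y_1, …, y_k]` such that for every
`a ∈ ℂ^k` with `h(a) ≠ 0`, the specialized system
`f_1(a, x) = … = f_m(a, x) = 0` has a solution `x ∈ ℂ^s`. -/
theorem parametric_system_solvable_iff_generic_specialization_solvable
    {k s m : ℕ}
    (f : Fin m → MvPolynomial (Fin s) (MvPolynomial (Fin k) ℂ)) :
    (∃ x : Fin s → AlgebraicClosure (FractionRing (MvPolynomial (Fin k) ℂ)),
        ∀ t : Fin m,
          MvPolynomial.eval₂
            ((algebraMap (FractionRing (MvPolynomial (Fin k) ℂ))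
                (AlgebraicClosure (FractionRing (MvPolynomial (Fin k) ℂ)))).comp
              (algebraMap (MvPolynomial (Fin k) ℂ) (FractionRing (MvPolynomial (Fin k) ℂ))))
            x (f t) = 0)
    ↔
    (∃ h : MvPolynomial (Fin k) ℂ, h ≠ 0 ∧
        ∀ a : Fin k → ℂ, MvPolynomial.eval a h ≠ 0 →
          ∃ x : Fin s → ℂ, ∀ t : Fin m,
            MvPolynomial.eval₂ (MvPolynomial.eval a) x (f t) = 0) := by
  classical
  have hcomp : ((algebraMap (Fk k) (Kk k)).comp (algebraMap (Pk k) (Fk k)))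
      = algebraMap (Pk k) (Kk k) := (IsScalarTower.algebraMap_eq _ _ _).symm
  constructor
  · rintro ⟨x, hx⟩
    obtain ⟨h, hne, hsol⟩ := forward_abstract (K := Kk k) (C := ℂ) (Fk k) f x
      (fun t => by rw [← hcomp]; exact hx t)
    refine ⟨h, hne, fun a ha => ?_⟩
    exact hsol (MvPolynomial.eval a)
      (fun c => ⟨MvPolynomial.C c, MvPolynomial.eval_C _⟩) ha
  · rintro ⟨h, hne, hsol⟩
    obtain ⟨x, hx⟩ := backward_dir f h hne hsol
    exact ⟨x, fun t => by rw [hcomp]; exact hx t⟩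
end
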